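/- For every 0 < a < 1 and 0 < γ < 1/2 there exists c > 0 such that, for B_p as above, sup_{a e^{−p^γ} ≤ |z| < 1} |B_p(z) − (p−1)/(2π)| = O(exp(−c p^{1−2γ})) as p → ∞. -/

import Mathlib

/-! The `k = 0` term of the series is `1`. For `k ≠ 0` the ratio `w = t / (2πik + t)` has
`|w|² = t² / (t² + 4π²k²)`, which is bounded both by `t² / (t² + 4π²) ≤ exp (-4π² / (t² + 4π²))`
and by `t² / (4π²k²)`. Using the first bound on `p - 2` factors of `w^p` and the second on the
remaining two gives a summable majorant of size `exp (-(p - 2) · 2π² / (t² + 4π²)) · t²`.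
On `|z| ≥ a e^{-p^γ}` one has `t ≤ 2 (1 + |log a|) p^γ`, so this exponent is at least
`2c p^{1-2γ} - 1`, and half of the exponential absorbs the polynomial factor `O(p²)`. -/

open Real

noncomputable def bergmanTerm (p : ℕ) (t : ℝ) (k : ℤ) : ℂ :=
  (t : ℂ) ^ p / (2 * π * Complex.I * k + t) ^ p

section BergmanSeries

variable {p : ℕ} {t : ℝ} {k : ℤ}

lemma sq_norm_div_two_pi_I_mul_add (t : ℝ) (k : ℤ) :
    ‖(t : ℂ) / (2 * π * Complex.I * k + t)‖ ^ 2 = t ^ 2 / (t ^ 2 + 4 * π ^ 2 * k ^ 2) := by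
  have hw : (2 * π * Complex.I * k + t : ℂ) = (t : ℂ) + ((2 * π * k : ℝ) : ℂ) * Complex.I := by
    push_cast; ring
  rw [norm_div, div_pow, hw, Complex.norm_add_mul_I, Complex.norm_real, Real.norm_eq_abs, sq_abs,
    sq_sqrt (by positivity)]
  ring

lemma sq_norm_div_two_pi_I_mul_add_le_inv_sq (hk : k ≠ 0) :
    ‖(t : ℂ) / (2 * π * Complex.I * k + t)‖ ^ 2 ≤ t ^ 2 / (4 * π ^ 2) * (1 / (k : ℝ) ^ 2) := by
  have hk2 : (0 : ℝ) < (k : ℝ) ^ 2 := by positivity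
  rw [sq_norm_div_two_pi_I_mul_add, ← div_mul_eq_div_mul_one_div]
  exact div_le_div_of_nonneg_left (sq_nonneg t) (by positivity) (by linarith [sq_nonneg t])

lemma norm_div_two_pi_I_mul_add_le_exp (hk : k ≠ 0) :
    ‖(t : ℂ) / (2 * π * Complex.I * k + t)‖ ≤ exp (-(2 * π ^ 2 / (t ^ 2 + 4 * π ^ 2))) := by
  have hk2 : (1 : ℝ) ≤ (k : ℝ) ^ 2 := by
    rw [one_le_sq_iff_one_le_abs, ← Int.cast_abs]; exact_mod_cast Int.one_le_abs hk
  have hden : 0 < t ^ 2 + 4 * π ^ 2 := by positivity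
  rw [← pow_le_pow_iff_left₀ (norm_nonneg _) (exp_pos _).le two_ne_zero, ← exp_nat_mul,
    sq_norm_div_two_pi_I_mul_add]
  calc t ^ 2 / (t ^ 2 + 4 * π ^ 2 * k ^ 2) ≤ t ^ 2 / (t ^ 2 + 4 * π ^ 2) :=
        div_le_div_of_nonneg_left (sq_nonneg t) hden (by nlinarith [pi_pos])
    _ = -(4 * π ^ 2 / (t ^ 2 + 4 * π ^ 2)) + 1 := by field_simp; ring
    _ ≤ exp ((2 : ℕ) * -(2 * π ^ 2 / (t ^ 2 + 4 * π ^ 2))) := by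
        convert add_one_le_exp _ using 3; push_cast; ring

lemma norm_bergmanTerm_le (hp : 2 ≤ p) (hk : k ≠ 0) :
    ‖bergmanTerm p t k‖ ≤
      exp (-(2 * π ^ 2 / (t ^ 2 + 4 * π ^ 2))) ^ (p - 2) * (t ^ 2 / (4 * π ^ 2)) *
        (1 / (k : ℝ) ^ 2) := by
  rw [bergmanTerm, ← div_pow, norm_pow, ← Nat.sub_add_cancel hp, pow_add, Nat.add_sub_cancel,
    mul_assoc _ (t ^ 2 / _)]
  exact mul_le_mul (pow_le_pow_left₀ (norm_nonneg _) (norm_div_two_pi_I_mul_add_le_exp hk) _)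
    (sq_norm_div_two_pi_I_mul_add_le_inv_sq hk) (by positivity) (by positivity)

lemma bergmanTerm_zero (ht : t ≠ 0) : bergmanTerm p t 0 = 1 := by
  simp [bergmanTerm, ht]

lemma norm_tsum_bergmanTerm_sub_one_le (hp : 2 ≤ p) (ht : t ≠ 0) :
    ‖(∑' k, bergmanTerm p t k) - 1‖ ≤
      exp (-(2 * π ^ 2 / (t ^ 2 + 4 * π ^ 2))) ^ (p - 2) * (t ^ 2 / (4 * π ^ 2)) *
        ∑' k : ℤ, 1 / (k : ℝ) ^ 2 := by
  set F := Function.update (bergmanTerm p t) 0 0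
  have hg := ((summable_one_div_int_pow.mpr one_lt_two).hasSum).mul_left
    (exp (-(2 * π ^ 2 / (t ^ 2 + 4 * π ^ 2))) ^ (p - 2) * (t ^ 2 / (4 * π ^ 2)))
  have hF : ∀ k, ‖F k‖ ≤ exp (-(2 * π ^ 2 / (t ^ 2 + 4 * π ^ 2))) ^ (p - 2) *
      (t ^ 2 / (4 * π ^ 2)) * (1 / (k : ℝ) ^ 2) := by
    intro k
    rcases eq_or_ne k 0 with rfl | hk
    · simp [F]
    · simpa [F, hk] using norm_bergmanTerm_le hp hk
  have hupdate : Function.update F 0 1 = bergmanTerm p t := by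
    rw [Function.update_idem, ← bergmanTerm_zero (p := p) ht, Function.update_eq_self]
  have hsum : HasSum (bergmanTerm p t) (1 + ∑' k, F k) := by
    simpa [hupdate, F] using (Summable.of_norm_bounded hg.summable hF).hasSum.update 0 1
  rw [hsum.tsum_eq, add_sub_cancel_left]
  exact tsum_of_norm_bounded hg hF

end BergmanSeries

lemma rpow_mul_rpow_sq_eq_self {x : ℝ} (hx : 0 ≤ x) (γ : ℝ) :
    x ^ (1 - 2 * γ) * (x ^ γ) ^ 2 = x := by
  rw [← rpow_natCast, ← rpow_mul hx, ← rpow_add' hx (by ring_nf; norm_num)]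
  ring_nf
  exact rpow_one x

lemma exp_neg_pow_sub_two_le {p : ℕ} {t A γ : ℝ} (hp : 2 ≤ p) (hγ : 0 ≤ γ) (ht0 : 0 ≤ t)
    (ht : t ≤ A * (p : ℝ) ^ γ) :
    exp (-(2 * π ^ 2 / (t ^ 2 + 4 * π ^ 2))) ^ (p - 2) ≤
      exp 1 * exp (-(2 * (π ^ 2 / (A ^ 2 + 4 * π ^ 2))) * (p : ℝ) ^ (1 - 2 * γ)) := by
  set P := (p : ℝ) ^ γ
  have hP : 1 ≤ P := one_le_rpow (by exact_mod_cast (one_le_two.trans hp)) hγ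
  have hden : t ^ 2 + 4 * π ^ 2 ≤ (A ^ 2 + 4 * π ^ 2) * P ^ 2 := by
    nlinarith [pow_le_pow_left₀ ht0 ht 2, pi_pos, one_le_pow₀ (n := 2) hP]
  have hs : 2 * π ^ 2 / (t ^ 2 + 4 * π ^ 2) ≤ 1 / 2 := by
    rw [div_le_iff₀ (by positivity)]; nlinarith [sq_nonneg t]
  have hps : 2 * (π ^ 2 / (A ^ 2 + 4 * π ^ 2)) * (p : ℝ) ^ (1 - 2 * γ) ≤
      p * (2 * π ^ 2 / (t ^ 2 + 4 * π ^ 2)) := by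
    calc 2 * (π ^ 2 / (A ^ 2 + 4 * π ^ 2)) * (p : ℝ) ^ (1 - 2 * γ)
        = (p : ℝ) ^ (1 - 2 * γ) * P ^ 2 * (2 * π ^ 2 / ((A ^ 2 + 4 * π ^ 2) * P ^ 2)) := by
          field_simp
      _ ≤ p * (2 * π ^ 2 / (t ^ 2 + 4 * π ^ 2)) := by
          rw [rpow_mul_rpow_sq_eq_self (Nat.cast_nonneg p)]
          gcongr
  rw [← exp_nat_mul, ← exp_add, exp_le_exp, Nat.cast_sub hp]
  push_cast
  nlinarith

lemma abs_log_sq_le_of_mul_exp_neg_le {a P r : ℝ} (ha : 0 < a) (hP : 1 ≤ P)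
    (h : a * exp (-P) ≤ r) (hr : r ≤ 1) :
    |log (r ^ 2)| ≤ 2 * (1 + |log a|) * P := by
  have hr0 : 0 < r := (by positivity : 0 < a * exp (-P)).trans_le h
  have hlog : log a - P ≤ log r := by
    simpa [log_mul ha.ne' (exp_pos _).ne', sub_eq_add_neg] using log_le_log (by positivity) h
  rw [log_pow, Nat.cast_ofNat, abs_of_nonpos (by nlinarith [log_nonpos hr0.le hr])]
  nlinarith [neg_abs_le (log a), abs_nonneg (log a)]

lemma exists_pow_mul_exp_neg_mul_rpow_le (k : ℕ) {c δ : ℝ} (hc : 0 < c) (hδ : 0 < δ) :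
    ∃ M, ∀ x : ℝ, 1 ≤ x → x ^ k * exp (-(c * x ^ δ)) ≤ M := by
  obtain ⟨n, hn⟩ := exists_nat_ge (k / δ)
  refine ⟨n.factorial / c ^ n, fun x hx => ?_⟩
  have hxk : x ^ k ≤ (x ^ δ) ^ n := by
    rw [← rpow_natCast, ← rpow_natCast (x ^ δ), ← rpow_mul (by linarith)]
    exact rpow_le_rpow_of_exponent_le hx (by rwa [div_le_iff₀ hδ, mul_comm] at hn)
  have hexp := pow_div_factorial_le_exp (c * x ^ δ) (by positivity) n
  rw [exp_neg, ← div_eq_mul_inv, div_le_div_iff₀ (exp_pos _) (by positivity)]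
  calc x ^ k * c ^ n ≤ (c * x ^ δ) ^ n := by rw [mul_pow, mul_comm]; gcongr
    _ ≤ n.factorial * exp (c * x ^ δ) := by
        rw [div_le_iff₀ (by positivity)] at hexp
        linarith

lemma norm_bergman_density_sub_le {p : ℕ} {t A γ : ℝ} (hp : 2 ≤ p) (hγ0 : 0 ≤ γ)
    (hγ1 : γ ≤ 1 / 2) (ht0 : 0 < t) (ht : t ≤ A * (p : ℝ) ^ γ) :
    ‖((p : ℂ) - 1) / (2 * π) * (∑' k, bergmanTerm p t k) - ((p : ℂ) - 1) / (2 * π)‖ ≤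
      exp 1 * A ^ 2 * (∑' k : ℤ, 1 / (k : ℝ) ^ 2) / (8 * π ^ 3) *
        ((p : ℝ) ^ 2 * exp (-(2 * (π ^ 2 / (A ^ 2 + 4 * π ^ 2))) * (p : ℝ) ^ (1 - 2 * γ))) := by
  have hp1 : (1 : ℝ) ≤ p := by exact_mod_cast one_le_two.trans hp
  have hcoeff0 : 0 ≤ ((p : ℝ) - 1) / (2 * π) := div_nonneg (by linarith) (by positivity)
  have hcoeff : ‖((p : ℂ) - 1) / (2 * π)‖ = ((p : ℝ) - 1) / (2 * π) := by
    rw [← Complex.ofReal_natCast, ← Complex.ofReal_one, ← Complex.ofReal_sub,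
      ← Complex.ofReal_ofNat, ← Complex.ofReal_mul, ← Complex.ofReal_div, Complex.norm_real,
      norm_of_nonneg hcoeff0]
  have hP : ((p : ℝ) ^ γ) ^ 2 ≤ p := by
    rw [← rpow_natCast, ← rpow_mul (by linarith)]
    simpa using rpow_le_rpow_of_exponent_le hp1 (by push_cast; linarith : γ * (2 : ℕ) ≤ 1)
  have htsq : t ^ 2 ≤ A ^ 2 * p := by
    nlinarith [pow_le_pow_left₀ ht0.le ht 2, sq_nonneg A]
  rw [← mul_sub_one, norm_mul, hcoeff]
  calc ((p : ℝ) - 1) / (2 * π) * ‖(∑' k, bergmanTerm p t k) - 1‖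
      ≤ (p : ℝ) / (2 * π) * (exp 1 * exp (-(2 * (π ^ 2 / (A ^ 2 + 4 * π ^ 2))) *
          (p : ℝ) ^ (1 - 2 * γ)) * (A ^ 2 * p / (4 * π ^ 2)) * ∑' k : ℤ, 1 / (k : ℝ) ^ 2) := by
        have hZ : 0 ≤ ∑' k : ℤ, 1 / (k : ℝ) ^ 2 := tsum_nonneg fun k => by positivity
        grw [norm_tsum_bergmanTerm_sub_one_le hp ht0.ne', exp_neg_pow_sub_two_le hp hγ0 ht0.le ht,
          htsq]
        gcongr
        linarith
    _ = _ := by ring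

theorem bergman_density_exp_decay_shrinking_general (a γ : ℝ) (ha0 : 0 < a)
    (hγ0 : 0 < γ) (hγ1 : γ < 1 / 2) :
    ∃ c > (0 : ℝ), ∃ C : ℝ, ∀ p : ℕ, 2 ≤ p → ∀ z : ℂ,
      a * Real.exp (-((p : ℝ) ^ γ)) ≤ ‖z‖ → ‖z‖ < 1 →
      ‖
        ((((p : ℂ) - 1) / (2 * Real.pi))
            * (∑' k : ℤ, ((|Real.log (‖z‖ ^ 2)| : ℝ) : ℂ) ^ p
                / (2 * Real.pi * Complex.I * (k : ℂ)
                    + ((|Real.log (‖z‖ ^ 2)| : ℝ) : ℂ)) ^ p)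
          - ((p : ℂ) - 1) / (2 * Real.pi))‖
        ≤ C * Real.exp (-c * (p : ℝ) ^ (1 - 2 * γ)) := by
  set A := 2 * (1 + |log a|)
  set c := π ^ 2 / (A ^ 2 + 4 * π ^ 2)
  set K := exp 1 * A ^ 2 * (∑' k : ℤ, 1 / (k : ℝ) ^ 2) / (8 * π ^ 3)
  obtain ⟨M, hM⟩ := exists_pow_mul_exp_neg_mul_rpow_le 2 (c := c) (by positivity)
    (by linarith : 0 < 1 - 2 * γ)
  refine ⟨c, by positivity, K * M, fun p hp z hz hz1 => ?_⟩
  have hp1 : (1 : ℝ) ≤ p := by exact_mod_cast one_le_two.trans hp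
  have hz0 : 0 < ‖z‖ := (by positivity : 0 < a * exp (-((p : ℝ) ^ γ))).trans_le hz
  have ht0 : 0 < |log (‖z‖ ^ 2)| :=
    abs_pos.mpr (log_neg (by positivity) (pow_lt_one₀ hz0.le hz1 two_ne_zero)).ne
  have ht := abs_log_sq_le_of_mul_exp_neg_le ha0 (one_le_rpow hp1 hγ0.le) hz hz1.le
  have hK : 0 ≤ K := by positivity
  calc _ ≤ K * ((p : ℝ) ^ 2 * exp (-(2 * c) * (p : ℝ) ^ (1 - 2 * γ))) :=
        norm_bergman_density_sub_le hp hγ0.le hγ1.le ht0 ht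
    _ = K * ((p : ℝ) ^ 2 * exp (-(c * (p : ℝ) ^ (1 - 2 * γ)))) *
          exp (-c * (p : ℝ) ^ (1 - 2 * γ)) := by
        rw [mul_assoc, mul_assoc, ← exp_add]; ring_nf
    _ ≤ K * M * exp (-c * (p : ℝ) ^ (1 - 2 * γ)) := by grw [hM p hp1]

/-- for 0 < a < 1 and 0 < γ < 1/2, there is c > 0 with
sup_{a e^{−p^γ} ≤ |z| < 1} |B_p(z) − (p−1)/(2π)| = O(exp(−c p^{1−2γ})). -/
theorem bergman_density_exp_decay_shrinking (a γ : ℝ) (ha0 : 0 < a) (ha1 : a < 1)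
    (hγ0 : 0 < γ) (hγ1 : γ < 1 / 2) :
    ∃ c > (0 : ℝ), ∃ C : ℝ, ∀ p : ℕ, 2 ≤ p → ∀ z : ℂ,
      a * Real.exp (-((p : ℝ) ^ γ)) ≤ ‖z‖ → ‖z‖ < 1 →
      ‖
        ((((p : ℂ) - 1) / (2 * Real.pi))
            * (∑' k : ℤ, ((|Real.log (‖z‖ ^ 2)| : ℝ) : ℂ) ^ p
                / (2 * Real.pi * Complex.I * (k : ℂ)
                    + ((|Real.log (‖z‖ ^ 2)| : ℝ) : ℂ)) ^ p)
          - ((p : ℂ) - 1) / (2 * Real.pi))‖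
        ≤ C * Real.exp (-c * (p : ℝ) ^ (1 - 2 * γ)) :=
  bergman_density_exp_decay_shrinking_general a γ ha0 hγ0 hγ1
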